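/- Fix an integer r ≥ 2. With L(n) := log_2(2n^3) and a(n) := (1/3) n^{2/3}, define Σ_B(n) := Σ p(λ)^r, the sum over all partitions λ of n whose number of parts satisfies ω_n(λ) ≤ L(n) and whose largest part satisfies n/L(n) ≤ T(λ) < n − a(n). Then n^r · Σ_B(n) → 0 as n → ∞; that is, Σ_B(n) = o(1/n^r). -/

import Mathlib

open scoped Classical

/-- Cauchy's formula: `p(λ) = ∏_{j=1}^n 1/(j^{λ_j} ⬝ λ_j!)` is the probability that a
uniformly random permutation of `n` letters has cycle structure `λ`, where `λ_j` is the
number of parts of `λ` equal to `j`. -/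
noncomputable def pOf {n : ℕ} (μ : Nat.Partition n) : ℝ :=
  ∏ j ∈ Finset.Icc 1 n,
    1 / ((j : ℝ) ^ (μ.parts.count j) * (Nat.factorial (μ.parts.count j) : ℝ))

/-- `L(n) = log₂(2n³)`. -/
noncomputable def LCut (n : ℕ) : ℝ := Real.logb 2 (2 * (n : ℝ) ^ 3)

/-- `a(n) = n^{2/3}/3`. -/
noncomputable def aCut (n : ℕ) : ℝ := (1 / 3) * (n : ℝ) ^ ((2 : ℝ) / 3)

/-- `Σ_B(n)`: the sum of `p(λ)^r` over all partitions `λ` of `n` with at most `L(n)`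
parts and whose largest part `T(λ)` satisfies `n/L(n) ≤ T(λ) < n - a(n)`. -/
noncomputable def SigmaB (r n : ℕ) : ℝ :=
  ∑ μ ∈ Finset.univ.filter
      (fun μ : Nat.Partition n =>
        (μ.parts.card : ℝ) ≤ LCut n ∧
        (n : ℝ) / LCut n ≤ (μ.parts.sup : ℝ) ∧
        (μ.parts.sup : ℝ) < (n : ℝ) - aCut n),
    pOf μ ^ r


open Finset Filter

noncomputable def wfun (N : ℕ) (s : Multiset ℕ) : ℝ :=
  ∏ j ∈ Finset.Icc 1 N, 1 / ((j : ℝ) ^ (2 * s.count j) * (Nat.factorial (s.count j) : ℝ))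

lemma wfactor_pos {j c d : ℕ} (hj : 1 ≤ j) : 0 < 1 / ((j : ℝ) ^ c * (Nat.factorial d : ℝ)) := by
  have h1 : (0:ℝ) < (j:ℝ) ^ c := pow_pos (by exact_mod_cast hj) c
  have h2 : (0:ℝ) < (Nat.factorial d : ℝ) := by exact_mod_cast Nat.factorial_pos d
  positivity

lemma wfactor_le_one {j c d : ℕ} (hj : 1 ≤ j) : 1 / ((j : ℝ) ^ c * (Nat.factorial d : ℝ)) ≤ 1 := by
  rw [div_le_one]
  · have h1 : (1:ℝ) ≤ (j:ℝ) ^ c := one_le_pow₀ (by exact_mod_cast hj)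
    have h2 : (1:ℝ) ≤ (Nat.factorial d : ℝ) := by
      exact_mod_cast Nat.one_le_iff_ne_zero.2 (Nat.factorial_ne_zero d)
    nlinarith
  · have h1 : (0:ℝ) < (j:ℝ) ^ c := pow_pos (by exact_mod_cast hj) c
    have h2 : (0:ℝ) < (Nat.factorial d : ℝ) := by exact_mod_cast Nat.factorial_pos d
    positivity

lemma wfun_nonneg (N : ℕ) (s : Multiset ℕ) : 0 ≤ wfun N s :=
  Finset.prod_nonneg fun j hj => (wfactor_pos (Finset.mem_Icc.1 hj).1).le

lemma wfun_ext {s : Multiset ℕ} {k N : ℕ} (hs : ∀ x ∈ s, x ≤ k) (hkN : k ≤ N) :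
    wfun N s = wfun k s := by
  unfold wfun
  rw [← Finset.prod_subset (Finset.Icc_subset_Icc_right hkN)]
  intro j hj hj'
  have : j ∉ s := by
    intro hmem
    have := hs j hmem
    have h1 := (Finset.mem_Icc.1 hj).1
    have h2 := (Finset.mem_Icc.1 hj).2
    simp only [Finset.mem_Icc, not_and, not_le] at hj'
    omega
  rw [Multiset.count_eq_zero_of_notMem this]
  simp [Nat.factorial]


set_option maxHeartbeats 1000000 in
lemma wfun_erase {s : Multiset ℕ} {T N : ℕ} (hT : T ∈ s) (h1 : 1 ≤ T) (hTN : T ≤ N) :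
    (s.count T : ℝ) * wfun N s = ((T:ℝ)^2)⁻¹ * wfun N (s.erase T) := by
  unfold wfun
  have hmem : T ∈ Finset.Icc 1 N := Finset.mem_Icc.2 ⟨h1, hTN⟩
  rw [← Finset.mul_prod_erase _ _ hmem, ← Finset.mul_prod_erase _ (fun j : ℕ => 1 / ((j : ℝ) ^ (2 * Multiset.count j (s.erase T)) * ((Multiset.count j (s.erase T)).factorial : ℝ))) hmem]
  have hcount : ∀ j ≠ T, (s.erase T).count j = s.count j := fun j hj => Multiset.count_erase_of_ne hj _
  have hprodeq : ∏ j ∈ (Finset.Icc 1 N).erase T, 1 / ((j : ℝ) ^ (2 * (s.erase T).count j) * (Nat.factorial ((s.erase T).count j) : ℝ))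
      = ∏ j ∈ (Finset.Icc 1 N).erase T, 1 / ((j : ℝ) ^ (2 * s.count j) * (Nat.factorial (s.count j) : ℝ)) := by
    apply Finset.prod_congr rfl
    intro j hj
    rw [hcount j (Finset.ne_of_mem_erase hj)]
  rw [hprodeq, ← mul_assoc, ← mul_assoc]
  congr 1
  rw [Multiset.count_erase_self]
  obtain ⟨d, hd⟩ : ∃ d, s.count T = d + 1 :=
    ⟨s.count T - 1, by have := Multiset.count_pos.2 hT; omega⟩
  rw [hd]
  simp only [Nat.add_sub_cancel]
  have hTpos : (0:ℝ) < (T:ℝ) := by exact_mod_cast h1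
  have hfd : (0:ℝ) < (Nat.factorial d : ℝ) := by exact_mod_cast Nat.factorial_pos d
  rw [Nat.factorial_succ]
  have hTp : (0:ℝ) < (T:ℝ) ^ (2*d) := pow_pos hTpos _
  have hexp : 2 * (d+1) = (2*d) + 2 := by ring
  rw [hexp, pow_add]
  push_cast
  field_simp


lemma mem_le_msum {s : Multiset ℕ} {x : ℕ} (hx : x ∈ s) : x ≤ s.sum := by
  rw [← Multiset.cons_erase hx, Multiset.sum_cons]
  exact Nat.le_add_right _ _

noncomputable def Wgt {m : ℕ} (μ : Nat.Partition m) : ℝ := wfun m μ.parts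

lemma Wgt_nonneg {m : ℕ} (μ : Nat.Partition m) : 0 ≤ Wgt μ := wfun_nonneg _ _

noncomputable def Q (m : ℕ) : ℝ := ∑ μ : Nat.Partition m, Wgt μ

lemma Q_nonneg (m : ℕ) : 0 ≤ Q m := Finset.sum_nonneg fun μ _ => Wgt_nonneg μ

noncomputable def onesPart (k : ℕ) : Nat.Partition k :=
  ⟨Multiset.replicate k 1, fun hi => by rw [Multiset.eq_of_mem_replicate hi]; exact Nat.one_pos,
    by simp [Multiset.sum_replicate]⟩

noncomputable def eraseP {m : ℕ} (T : ℕ) (μ : Nat.Partition m) : Nat.Partition (m - T) :=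
  if h : T ∈ μ.parts then
    ⟨μ.parts.erase T,
      fun hi => μ.parts_pos (Multiset.mem_of_mem_erase hi),
      by
        have h2 := Multiset.cons_erase h
        have h3 : T + (μ.parts.erase T).sum = m := by
          rw [← Multiset.sum_cons, h2, μ.parts_sum]
        have h4 : T ≤ m := by omega
        omega⟩
  else onesPart (m - T)

lemma eraseP_parts {m : ℕ} {T : ℕ} {μ : Nat.Partition m} (h : T ∈ μ.parts) :
    (eraseP T μ).parts = μ.parts.erase T := by
  unfold eraseP
  rw [dif_pos h]

lemma parts_le {m : ℕ} (μ : Nat.Partition m) : ∀ x ∈ μ.parts, x ≤ m := by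
  intro x hx
  have := mem_le_msum hx
  rwa [μ.parts_sum] at this

lemma Q_zero : Q 0 = 1 := by
  have huniq : ∀ μ : Nat.Partition 0, μ = onesPart 0 := by
    intro μ
    ext1
    have h0 : μ.parts = 0 := by
      by_contra h
      obtain ⟨x, hx⟩ := Multiset.exists_mem_of_ne_zero h
      have h1 := μ.parts_pos hx
      have h2 := mem_le_msum hx
      rw [μ.parts_sum] at h2
      omega
    simp [h0, onesPart]
  rw [Q, Finset.sum_eq_single (onesPart 0)]
  · simp [Wgt, wfun]
  · intro μ _ hne; exact absurd (huniq μ) hne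
  · intro h; exact absurd (Finset.mem_univ _) h

lemma core (m T : ℕ) (h1 : 1 ≤ T) (hTm : T ≤ m) :
    ∑ μ : Nat.Partition m, (μ.parts.count T : ℝ) * Wgt μ ≤ ((T:ℝ)^2)⁻¹ * Q (m - T) := by
  classical
  have h0 : ∑ μ ∈ (Finset.univ.filter (fun μ : Nat.Partition m => T ∈ μ.parts)),
      (μ.parts.count T : ℝ) * Wgt μ = ∑ μ : Nat.Partition m, (μ.parts.count T : ℝ) * Wgt μ := by
    apply Finset.sum_filter_of_ne
    intro μ _ hne
    by_contra h
    rw [Multiset.count_eq_zero_of_notMem h] at hne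
    simp at hne
  rw [← h0]
  have key : ∀ μ ∈ (Finset.univ.filter (fun μ : Nat.Partition m => T ∈ μ.parts)),
      (μ.parts.count T : ℝ) * Wgt μ = ((T:ℝ)^2)⁻¹ * Wgt (eraseP T μ) := by
    intro μ hμ
    have hT : T ∈ μ.parts := (Finset.mem_filter.1 hμ).2
    have hsum : (μ.parts.erase T).sum = m - T := by
      have h2 := Multiset.cons_erase hT
      have h3 : T + (μ.parts.erase T).sum = m := by
        rw [← Multiset.sum_cons, h2, μ.parts_sum]
      omega
    have e1 : Wgt (eraseP T μ) = wfun m (μ.parts.erase T) := by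
      rw [Wgt, eraseP_parts hT]
      refine (wfun_ext ?_ (Nat.sub_le m T)).symm
      intro x hx
      have := mem_le_msum hx
      omega
    rw [e1, Wgt]
    exact wfun_erase hT h1 hTm
  rw [Finset.sum_congr rfl key, ← Finset.mul_sum]
  apply mul_le_mul_of_nonneg_left _ (by positivity)
  have hinj : ∀ μ₁ ∈ (Finset.univ.filter (fun μ : Nat.Partition m => T ∈ μ.parts)),
      ∀ μ₂ ∈ (Finset.univ.filter (fun μ : Nat.Partition m => T ∈ μ.parts)),
      eraseP T μ₁ = eraseP T μ₂ → μ₁ = μ₂ := by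
    intro μ₁ h₁ μ₂ h₂ he
    have hT₁ : T ∈ μ₁.parts := (Finset.mem_filter.1 h₁).2
    have hT₂ : T ∈ μ₂.parts := (Finset.mem_filter.1 h₂).2
    ext1
    have : μ₁.parts.erase T = μ₂.parts.erase T := by
      rw [← eraseP_parts hT₁, ← eraseP_parts hT₂, he]
    rw [← Multiset.cons_erase hT₁, ← Multiset.cons_erase hT₂, this]
  rw [← Finset.sum_image hinj]
  exact Finset.sum_le_sum_of_subset_of_nonneg (Finset.subset_univ _) (fun ν _ _ => Wgt_nonneg ν)


noncomputable def fQ (i : ℕ) : ℝ := 1 / (((i:ℝ)+1) * Real.sqrt ((i:ℝ)+1))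

lemma fQ_nonneg (i : ℕ) : 0 ≤ fQ i := by
  unfold fQ; positivity

lemma fQ_tele {i : ℕ} (hi : 1 ≤ i) :
    fQ i ≤ 2 / Real.sqrt i - 2 / Real.sqrt ((i:ℝ)+1) := by
  have hi' : (1:ℝ) ≤ (i:ℝ) := by exact_mod_cast hi
  set x := Real.sqrt i with hx
  set y := Real.sqrt ((i:ℝ)+1) with hy
  have hx2 : x^2 = i := Real.sq_sqrt (by linarith)
  have hy2 : y^2 = (i:ℝ)+1 := Real.sq_sqrt (by linarith)
  have hxpos : 0 < x := Real.sqrt_pos.2 (by linarith)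
  have hypos : 0 < y := Real.sqrt_pos.2 (by linarith)
  have hxy : x ≤ y := Real.sqrt_le_sqrt (by linarith)
  have hx1 : 1 ≤ x := by nlinarith
  rw [fQ, div_sub_div _ _ (ne_of_gt hxpos) (ne_of_gt hypos), div_le_div_iff₀ (by nlinarith) (by positivity)]
  have h1 : (y - x) * (y + x) = 1 := by nlinarith
  nlinarith [sq_nonneg (y - x), sq_nonneg (x*y)]

lemma S1b {t : ℕ} (ht : 1 ≤ t) : ∀ k : ℕ, ∑ i ∈ Finset.Icc t k, fQ i ≤ 2 / Real.sqrt t := by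
  have htR : (0:ℝ) < Real.sqrt t := Real.sqrt_pos.2 (by exact_mod_cast ht)
  have main : ∀ k : ℕ, t ≤ k + 1 → ∑ i ∈ Finset.Icc t k, fQ i ≤ 2 / Real.sqrt t - 2 / Real.sqrt ((k:ℝ)+1) := by
    intro k
    induction k with
    | zero =>
      intro hk
      have ht1 : t = 1 := by omega
      subst ht1
      simp
    | succ k ih =>
      intro hk
      rcases Nat.lt_or_ge k (t-1) with h | h
      · have : t = k + 2 := by omega
        subst this
        rw [Finset.Icc_eq_empty (by omega)]
        simp only [Finset.sum_empty]
        have e : ((k:ℝ) + 1 + 1) = (((k+2 : ℕ)):ℝ) := by push_cast; ring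
        push_cast
        rw [e]
        push_cast
        simp
      · have htk : t ≤ k + 1 := by omega
        rw [Finset.sum_Icc_succ_top htk]
        have h2 := fQ_tele (i := k+1) (by omega)
        have h3 := ih (by omega)
        push_cast at h2 ⊢
        linarith
  intro k
  rcases Nat.lt_or_ge k t with h | h
  · rw [Finset.Icc_eq_empty (by omega)]
    simp only [Finset.sum_empty]
    positivity
  · have := main k (by omega)
    have h4 : 0 < Real.sqrt ((k:ℝ)+1) := Real.sqrt_pos.2 (by positivity)
    have h5 : 0 ≤ 2 / Real.sqrt ((k:ℝ)+1) := by positivity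
    linarith

lemma S1a (k : ℕ) : ∑ i ∈ Finset.range k, fQ i ≤ 3 := by
  rcases Nat.eq_zero_or_pos k with rfl | hk
  · simp
  have hsplit : Finset.range k = insert 0 (Finset.Icc 1 (k-1)) := by
    ext i; simp [Finset.mem_range, Finset.mem_Icc]; omega
  rw [hsplit, Finset.sum_insert (by simp)]
  have h0 : fQ 0 = 1 := by norm_num [fQ, Real.sqrt_one]
  have h1 := S1b (t := 1) le_rfl (k-1)
  rw [Nat.cast_one, Real.sqrt_one] at h1
  linarith

lemma S2 : ∀ k : ℕ, ∑ j ∈ Finset.Icc 1 k, ((j:ℝ))⁻¹ ≤ 2 * Real.sqrt k := by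
  intro k
  induction k with
  | zero => simp
  | succ k ih =>
    rw [Finset.sum_Icc_succ_top (by omega)]
    set x := Real.sqrt k with hxd
    set y := Real.sqrt ((k:ℝ)+1) with hyd
    have hx2 : x^2 = k := Real.sq_sqrt (by positivity)
    have hy2 : y^2 = (k:ℝ)+1 := Real.sq_sqrt (by positivity)
    have hxpos : 0 ≤ x := Real.sqrt_nonneg _
    have hypos : 0 < y := Real.sqrt_pos.2 (by positivity)
    have hxy : x ≤ y := Real.sqrt_le_sqrt (by linarith)
    have hy1 : 1 ≤ y := by nlinarith
    have key : ((k:ℝ)+1)⁻¹ ≤ 2*y - 2*x := by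
      rw [inv_le_iff_one_le_mul₀ (by positivity)]
      have h1 : (y - x) * (y + x) = 1 := by nlinarith
      nlinarith
    push_cast
    -- goal : ∑ + (k+1)⁻¹ ≤ 2 * y
    have : (((k:ℕ):ℝ) + 1)⁻¹ = ((k:ℝ)+1)⁻¹ := by norm_num
    push_cast at ih ⊢
    linarith

lemma S3 {t : ℕ} (ht : 1 ≤ t) (k : ℕ) : ∑ T ∈ Finset.Icc t k, (((T:ℝ))^2)⁻¹ ≤ 2 / t := by
  have htR : (0:ℝ) < (t:ℝ) := by exact_mod_cast ht
  have main : ∀ k : ℕ, t ≤ k + 1 → ∑ T ∈ Finset.Icc t k, (((T:ℝ))^2)⁻¹ ≤ 2/(2*(t:ℝ)-1) - 2/(2*(k:ℝ)+1) := by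
    intro k
    induction k with
    | zero =>
      intro hk
      have ht1 : t = 1 := by omega
      subst ht1
      norm_num
    | succ k ih =>
      intro hk
      have tele : (((k:ℝ)+1)^2)⁻¹ ≤ 2/(2*(k:ℝ)+1) - 2/(2*(k:ℝ)+3) := by
        rw [div_sub_div _ _ (by positivity) (by positivity)]
        rw [inv_le_iff_one_le_mul₀ (by positivity)]
        have : (0:ℝ) < (2*(k:ℝ)+1)*(2*(k:ℝ)+3) := by positivity
        rw [div_mul_eq_mul_div, le_div_iff₀ this]
        nlinarith
      rcases Nat.lt_or_ge k (t-1) with h | h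
      · have : t = k + 2 := by omega
        subst this
        rw [Finset.Icc_eq_empty (by omega)]
        simp only [Finset.sum_empty]
        push_cast
        rw [sub_nonneg]
        apply div_le_div_of_nonneg_left (by norm_num) (by linarith) (by linarith)
      · have htk : t ≤ k + 1 := by omega
        rw [Finset.sum_Icc_succ_top htk]
        have h3 := ih (by omega)
        push_cast
        have e : 2*((k:ℝ)+1)+1 = 2*(k:ℝ)+3 := by ring
        rw [e]
        linarith [tele, h3]
  rcases Nat.lt_or_ge k t with h | h
  · rw [Finset.Icc_eq_empty (by omega)]
    simp only [Finset.sum_empty]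
    positivity
  · have h1 := main k (by omega)
    have h2 : (0:ℝ) < 2*(k:ℝ)+1 := by positivity
    have h3 : 0 ≤ 2/(2*(k:ℝ)+1) := by positivity
    have ht1 : (1:ℝ) ≤ (t:ℝ) := by exact_mod_cast ht
    have h4 : 2/(2*(t:ℝ)-1) ≤ 2/(t:ℝ) := by
      apply div_le_div_of_nonneg_left (by norm_num) htR (by linarith)
    linarith


lemma count_weighted_sum {m : ℕ} (μ : Nat.Partition m) :
    ∑ j ∈ Finset.Icc 1 m, j * μ.parts.count j = m := by
  classical
  have h1 : ∑ j ∈ μ.parts.toFinset, μ.parts.count j • j = m := by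
    have := Finset.sum_multiset_map_count μ.parts (id : ℕ → ℕ)
    rw [Multiset.map_id] at this
    simp only [id] at this
    rw [← this, μ.parts_sum]
  have h2 : μ.parts.toFinset ⊆ Finset.Icc 1 m := by
    intro x hx
    rw [Multiset.mem_toFinset] at hx
    exact Finset.mem_Icc.2 ⟨μ.parts_pos hx, parts_le μ x hx⟩
  calc ∑ j ∈ Finset.Icc 1 m, j * μ.parts.count j
      = ∑ j ∈ μ.parts.toFinset, j * μ.parts.count j := by
        symm
        apply Finset.sum_subset h2
        intro x _ hx
        rw [Multiset.count_eq_zero_of_notMem (by simpa using hx)]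
        ring
    _ = ∑ j ∈ μ.parts.toFinset, μ.parts.count j • j := by
        apply Finset.sum_congr rfl
        intro j _
        rw [smul_eq_mul]
        exact Nat.mul_comm _ _
    _ = m := h1

lemma Qrec {m : ℕ} (hm : 1 ≤ m) :
    (m:ℝ) * Q m ≤ ∑ j ∈ Finset.Icc 1 m, ((j:ℝ))⁻¹ * Q (m - j) := by
  have lhs_eq : (m:ℝ) * Q m
      = ∑ j ∈ Finset.Icc 1 m, (j:ℝ) * ∑ μ : Nat.Partition m, (μ.parts.count j : ℝ) * Wgt μ := by
    simp only [Finset.mul_sum]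
    rw [Finset.sum_comm]
    rw [Q, Finset.mul_sum]
    apply Finset.sum_congr rfl
    intro μ _
    have : ∑ j ∈ Finset.Icc 1 m, (j:ℝ) * ((μ.parts.count j : ℝ) * Wgt μ)
        = (∑ j ∈ Finset.Icc 1 m, ((j * μ.parts.count j : ℕ) : ℝ)) * Wgt μ := by
      rw [Finset.sum_mul]
      apply Finset.sum_congr rfl
      intro j _
      push_cast
      ring
    rw [this, ← Nat.cast_sum, count_weighted_sum μ]
  rw [lhs_eq]
  apply Finset.sum_le_sum
  intro j hj
  obtain ⟨hj1, hjm⟩ := Finset.mem_Icc.1 hj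
  have hjR : (0:ℝ) < (j:ℝ) := by exact_mod_cast hj1
  calc (j:ℝ) * ∑ μ : Nat.Partition m, (μ.parts.count j : ℝ) * Wgt μ
      ≤ (j:ℝ) * (((j:ℝ)^2)⁻¹ * Q (m - j)) :=
        mul_le_mul_of_nonneg_left (core m j hj1 hjm) hjR.le
    _ = ((j:ℝ))⁻¹ * Q (m - j) := by
        field_simp

lemma Q_le_one : ∀ m, Q m ≤ 1 := by
  intro m
  induction m using Nat.strong_induction_on with
  | _ m ih =>
    rcases Nat.eq_zero_or_pos m with rfl | hm
    · rw [Q_zero]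
    · have h := Qrec hm
      have hb : ∑ j ∈ Finset.Icc 1 m, ((j:ℝ))⁻¹ * Q (m - j) ≤ ∑ j ∈ Finset.Icc 1 m, 1 := by
        apply Finset.sum_le_sum
        intro j hj
        obtain ⟨hj1, hjm⟩ := Finset.mem_Icc.1 hj
        have h1 : ((j:ℝ))⁻¹ ≤ 1 := by
          rw [inv_le_one_iff₀]; right; exact_mod_cast hj1
        have h2 : Q (m - j) ≤ 1 := ih (m - j) (by omega)
        have h3 : 0 ≤ Q (m - j) := Q_nonneg _
        nlinarith
      rw [Finset.sum_const, Nat.card_Icc] at hb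
      rw [nsmul_eq_mul, mul_one] at hb
      have hmR : (0:ℝ) < (m:ℝ) := by exact_mod_cast hm
      have : (m:ℝ) * Q m ≤ (m:ℝ) := by
        have : ((m + 1 - 1 : ℕ):ℝ) = (m:ℝ) := by push_cast; ring
        rw [this] at hb
        linarith
      nlinarith


theorem Q_bound : ∀ m : ℕ, Q m ≤ 4913 * fQ m := by
  intro m
  induction m using Nat.strong_induction_on with
  | _ m ih =>
    have hfQpos : 0 < ((m:ℝ)+1) * Real.sqrt ((m:ℝ)+1) := by positivity
    rcases Nat.lt_or_ge m 289 with hsmall | hbig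
    · have h1 : Q m ≤ 1 := Q_le_one m
      have h2 : ((m:ℝ)+1) * Real.sqrt ((m:ℝ)+1) ≤ 4913 := by
        have hm1 : ((m:ℝ)+1) ≤ 289 := by
          have : (m:ℝ) ≤ 288 := by exact_mod_cast Nat.lt_succ_iff.1 hsmall
          linarith
        have hs : Real.sqrt ((m:ℝ)+1) ≤ 17 := by
          have : Real.sqrt ((m:ℝ)+1) ≤ Real.sqrt 289 := Real.sqrt_le_sqrt hm1
          rwa [show (289:ℝ) = 17^2 by norm_num, Real.sqrt_sq (by norm_num : (0:ℝ) ≤ 17)] at this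
        have hs0 : 0 ≤ Real.sqrt ((m:ℝ)+1) := Real.sqrt_nonneg _
        nlinarith
      rw [fQ, mul_one_div, le_div_iff₀ hfQpos]
      nlinarith
    · have hm : 1 ≤ m := by omega
      have hmR : (0:ℝ) < (m:ℝ) := by exact_mod_cast hm
      have hsm : (0:ℝ) < Real.sqrt m := Real.sqrt_pos.2 hmR
      have hsm2 : Real.sqrt m * Real.sqrt m = (m:ℝ) := Real.mul_self_sqrt hmR.le
      set h := m / 2 with hh
      have key : (m:ℝ) * Q m ≤ 14 * 4913 / m := by
        have h0 := Qrec hm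
        have hsplit : Finset.Icc 1 m = Finset.Icc 1 h ∪ Finset.Icc (h+1) m := by
          ext x; simp only [Finset.mem_Icc, Finset.mem_union]; omega
        have hdisj : Disjoint (Finset.Icc 1 h) (Finset.Icc (h+1) m) := by
          rw [Finset.disjoint_left]
          intro x hx hx'
          simp only [Finset.mem_Icc] at hx hx'
          omega
        rw [hsplit, Finset.sum_union hdisj] at h0
        have partB : ∑ j ∈ Finset.Icc 1 h, ((j:ℝ))⁻¹ * Q (m - j) ≤ 8 * 4913 / m := by
          have hB1 : ∀ j ∈ Finset.Icc 1 h, ((j:ℝ))⁻¹ * Q (m - j)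
              ≤ ((j:ℝ))⁻¹ * (4 * 4913 / ((m:ℝ) * Real.sqrt m)) := by
            intro j hj
            obtain ⟨hj1, hjh⟩ := Finset.mem_Icc.1 hj
            apply mul_le_mul_of_nonneg_left _ (by positivity)
            have hrec := (ih (m - j) (by omega)).trans_eq (by rw [fQ])
            set x := ((m - j : ℕ):ℝ) + 1 with hxd
            have hxm : (m:ℝ)/2 ≤ x := by
              have h1 : m / 2 ≤ m - j := by omega
              have h2 : ((m/2 : ℕ):ℝ) ≤ ((m - j : ℕ):ℝ) := by exact_mod_cast h1
              have h3 : (m:ℝ) - 1 ≤ 2 * ((m/2:ℕ):ℝ) := by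
                have : m - 1 ≤ 2 * (m/2) := by omega
                exact_mod_cast this
              rw [hxd]
              linarith
            have hxpos : (0:ℝ) < x := by positivity
            have hsx : 0 < Real.sqrt x := Real.sqrt_pos.2 hxpos
            have hsx2 : Real.sqrt x * Real.sqrt x = x := Real.mul_self_sqrt hxpos.le
            have hba : Real.sqrt m ≤ 2 * Real.sqrt x := by
              nlinarith [sq_nonneg (2 * Real.sqrt x - Real.sqrt m)]
            have hkey : 4913 * (1 / (x * Real.sqrt x)) ≤ 4 * 4913 / ((m:ℝ) * Real.sqrt m) := by
              rw [mul_one_div, div_le_div_iff₀ (by positivity) (by positivity)]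
              nlinarith
            linarith
          have hsum := Finset.sum_le_sum hB1
          rw [← Finset.sum_mul] at hsum
          have hS2 : ∑ j ∈ Finset.Icc 1 h, ((j:ℝ))⁻¹ ≤ 2 * Real.sqrt m := by
            refine (S2 h).trans ?_
            have : Real.sqrt h ≤ Real.sqrt m := Real.sqrt_le_sqrt (by exact_mod_cast Nat.div_le_self m 2)
            linarith
          have hpos : (0:ℝ) ≤ 4 * 4913 / ((m:ℝ) * Real.sqrt m) := by positivity
          have : (∑ j ∈ Finset.Icc 1 h, ((j:ℝ))⁻¹) * (4 * 4913 / ((m:ℝ) * Real.sqrt m))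
              ≤ (2 * Real.sqrt m) * (4 * 4913 / ((m:ℝ) * Real.sqrt m)) :=
            mul_le_mul_of_nonneg_right hS2 hpos
          have heq : (2 * Real.sqrt m) * (4 * 4913 / ((m:ℝ) * Real.sqrt m)) = 8 * 4913 / m := by
            field_simp
            nlinarith
          linarith
        have partA : ∑ j ∈ Finset.Icc (h+1) m, ((j:ℝ))⁻¹ * Q (m - j) ≤ 6 * 4913 / m := by
          have hA1 : ∀ j ∈ Finset.Icc (h+1) m, ((j:ℝ))⁻¹ * Q (m - j)
              ≤ (2/(m:ℝ)) * (4913 * fQ (m - j)) := by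
            intro j hj
            obtain ⟨hj1, hjm⟩ := Finset.mem_Icc.1 hj
            have hrec := ih (m - j) (by omega)
            have hjR : (0:ℝ) < (j:ℝ) := by
              have : 1 ≤ j := by omega
              exact_mod_cast this
            have hjinv : ((j:ℝ))⁻¹ ≤ 2/(m:ℝ) := by
              rw [inv_le_iff_one_le_mul₀ hjR]
              rw [div_mul_eq_mul_div, le_div_iff₀ hmR]
              have : (m:ℝ) ≤ 2 * (j:ℝ) := by
                have : m ≤ 2 * j := by omega
                exact_mod_cast this
              linarith
            have h1 : 0 ≤ Q (m - j) := Q_nonneg _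
            have h2 : 0 ≤ 4913 * fQ (m - j) := by
              have := fQ_nonneg (m - j); linarith
            exact mul_le_mul hjinv hrec h1 (by positivity)
          have hsum := Finset.sum_le_sum hA1
          rw [← Finset.mul_sum] at hsum
          have himg : ∑ j ∈ Finset.Icc (h+1) m, fQ (m - j) ≤ 3 := by
            have heq : ∑ j ∈ Finset.Icc (h+1) m, fQ (m - j)
                = ∑ i ∈ (Finset.Icc (h+1) m).image (fun j => m - j), fQ i := by
              rw [Finset.sum_image]
              intro x hx y hy hxy
              simp only [Finset.mem_coe, Finset.mem_Icc] at hx hy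
              beta_reduce at hxy
              omega
            rw [heq]
            refine le_trans (Finset.sum_le_sum_of_subset_of_nonneg ?_ (fun i _ _ => fQ_nonneg i)) (S1a m)
            intro i hi
            simp only [Finset.mem_image, Finset.mem_Icc, Finset.mem_range] at hi ⊢
            omega
          have h3 : (2/(m:ℝ)) * ∑ j ∈ Finset.Icc (h+1) m, 4913 * fQ (m - j)
              ≤ (2/(m:ℝ)) * (4913 * 3) := by
            apply mul_le_mul_of_nonneg_left _ (by positivity)
            rw [← Finset.mul_sum]
            nlinarith [himg]
          calc ∑ j ∈ Finset.Icc (h+1) m, ((j:ℝ))⁻¹ * Q (m - j)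
              ≤ (2/(m:ℝ)) * ∑ j ∈ Finset.Icc (h+1) m, 4913 * fQ (m - j) := hsum
            _ ≤ (2/(m:ℝ)) * (4913 * 3) := h3
            _ = 6 * 4913 / m := by ring
        have hadd : 8 * 4913 / (m:ℝ) + 6 * 4913 / (m:ℝ) = 14 * 4913 / (m:ℝ) := by ring
        linarith
      -- conclude
      have hQ : Q m ≤ 14 * 4913 / ((m:ℝ) * m) := by
        have k2 : ((m:ℝ) * Q m) * m ≤ (14 * 4913 / (m:ℝ)) * m :=
          mul_le_mul_of_nonneg_right key hmR.le
        have k3 : (14 * 4913 / (m:ℝ)) * m = 14 * 4913 := div_mul_cancel₀ _ hmR.ne'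
        rw [le_div_iff₀ (by positivity)]
        nlinarith
      rw [fQ, mul_one_div]
      refine hQ.trans ?_
      rw [div_le_div_iff₀ (by positivity) hfQpos]
      have h289 : (289:ℝ) ≤ (m:ℝ)+1 := by
        have : (289:ℝ) ≤ (m:ℝ) := by exact_mod_cast hbig
        linarith
      have hs17 : Real.sqrt ((m:ℝ)+1) ≤ ((m:ℝ)+1)/17 := by
        have h0 : (0:ℝ) ≤ (m:ℝ)+1 := by linarith
        have h1 : Real.sqrt ((m:ℝ)+1) * Real.sqrt ((m:ℝ)+1) = (m:ℝ)+1 := Real.mul_self_sqrt h0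
        have h2 : (17:ℝ) ≤ Real.sqrt ((m:ℝ)+1) := by
          have : Real.sqrt 289 ≤ Real.sqrt ((m:ℝ)+1) := Real.sqrt_le_sqrt h289
          rwa [show (289:ℝ) = 17^2 by norm_num, Real.sqrt_sq (by norm_num : (0:ℝ) ≤ 17)] at this
        nlinarith
      have hsnn : 0 ≤ Real.sqrt ((m:ℝ)+1) := Real.sqrt_nonneg _
      nlinarith


lemma msup_mem (s : Multiset ℕ) (h : s ≠ 0) : s.sup ∈ s := by
  induction s using Multiset.induction_on with
  | empty => exact absurd rfl h
  | cons a t ih =>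
    rw [Multiset.sup_cons]
    rcases eq_or_ne t 0 with rfl | ht
    · simp
    · rcases le_total a t.sup with hle | hle
      · rw [sup_eq_right.2 hle]
        exact Multiset.mem_cons_of_mem (ih ht)
      · rw [sup_eq_left.2 hle]
        exact Multiset.mem_cons_self a t

lemma pOf_nonneg {n : ℕ} (μ : Nat.Partition n) : 0 ≤ pOf μ :=
  Finset.prod_nonneg fun j hj => (wfactor_pos (Finset.mem_Icc.1 hj).1).le

lemma pOf_le_inv {n : ℕ} (μ : Nat.Partition n) {T : ℕ} (hT : T ∈ μ.parts)
    (h1 : 1 ≤ T) (hTn : T ≤ n) : pOf μ ≤ ((T:ℝ))⁻¹ := by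
  have hmem : T ∈ Finset.Icc 1 n := Finset.mem_Icc.2 ⟨h1, hTn⟩
  rw [pOf, ← Finset.mul_prod_erase _ _ hmem]
  have hrest : ∏ j ∈ (Finset.Icc 1 n).erase T,
      1 / ((j : ℝ) ^ (μ.parts.count j) * (Nat.factorial (μ.parts.count j) : ℝ)) ≤ 1 := by
    apply Finset.prod_le_one
    · intro j hj
      exact (wfactor_pos (Finset.mem_Icc.1 (Finset.mem_of_mem_erase hj)).1).le
    · intro j hj
      exact wfactor_le_one (Finset.mem_Icc.1 (Finset.mem_of_mem_erase hj)).1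
  have hfac : 1 / ((T : ℝ) ^ (μ.parts.count T) * (Nat.factorial (μ.parts.count T) : ℝ))
      ≤ ((T:ℝ))⁻¹ := by
    have hc : 1 ≤ μ.parts.count T := Multiset.count_pos.2 hT
    have hTR : (1:ℝ) ≤ (T:ℝ) := by exact_mod_cast h1
    rw [one_div, inv_le_inv₀]
    · have h1' : (T:ℝ) ^ 1 ≤ (T:ℝ) ^ (μ.parts.count T) :=
        pow_le_pow_right₀ hTR hc
      have h2' : (1:ℝ) ≤ (Nat.factorial (μ.parts.count T) : ℝ) := by
        exact_mod_cast Nat.one_le_iff_ne_zero.2 (Nat.factorial_ne_zero _)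
      nlinarith
    · have := @wfactor_pos T (μ.parts.count T) (μ.parts.count T) h1
      positivity
    · linarith
  have h2 := (wfactor_pos (j := T) (c := μ.parts.count T) (d := μ.parts.count T) h1).le
  calc (1 / ((T : ℝ) ^ (μ.parts.count T) * (Nat.factorial (μ.parts.count T) : ℝ))) *
        ∏ j ∈ (Finset.Icc 1 n).erase T,
          1 / ((j : ℝ) ^ (μ.parts.count j) * (Nat.factorial (μ.parts.count j) : ℝ))
      ≤ (1 / ((T : ℝ) ^ (μ.parts.count T) * (Nat.factorial (μ.parts.count T) : ℝ))) * 1 := by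
        apply mul_le_mul_of_nonneg_left hrest h2
    _ ≤ ((T:ℝ))⁻¹ := by rw [mul_one]; exact hfac

lemma pOf_sq_le_Wgt {n : ℕ} (μ : Nat.Partition n) : pOf μ ^ 2 ≤ Wgt μ := by
  rw [pOf, Wgt, wfun, ← Finset.prod_pow]
  apply Finset.prod_le_prod
  · intro j hj
    have := wfactor_pos (j := j) (c := μ.parts.count j) (d := μ.parts.count j)
      (Finset.mem_Icc.1 hj).1
    positivity
  · intro j hj
    have hj1 : 1 ≤ j := (Finset.mem_Icc.1 hj).1
    set c := μ.parts.count j with hc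
    have hjR : (0:ℝ) < (j:ℝ) := by exact_mod_cast hj1
    have hfc : (1:ℝ) ≤ (Nat.factorial c : ℝ) := by
      exact_mod_cast Nat.one_le_iff_ne_zero.2 (Nat.factorial_ne_zero _)
    have hp : (0:ℝ) < (j:ℝ) ^ c := pow_pos hjR c
    rw [div_pow, one_pow, pow_two, two_mul, pow_add]
    rw [div_le_div_iff₀ (by positivity) (by positivity)]
    ring_nf
    have h2 : (Nat.factorial c : ℝ) ≤ (Nat.factorial c : ℝ)^2 := by nlinarith
    have hp2 : (0:ℝ) ≤ (j:ℝ)^(c*2) := (pow_pos hjR _).le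
    exact mul_le_mul_of_nonneg_left h2 hp2


lemma inv_T_le (Lr nr Tr : ℝ) (hn0 : 0 < nr) (hL : 0 < Lr) (hT : 0 < Tr)
    (h : nr / Lr ≤ Tr) : Tr⁻¹ ≤ Lr / nr := by
  rw [inv_le_iff_one_le_mul₀ hT]
  calc (1:ℝ) = (Lr/nr) * (nr/Lr) := by field_simp
    _ ≤ (Lr/nr) * Tr := by
        apply mul_le_mul_of_nonneg_left h (by positivity)

set_option maxHeartbeats 2000000 in
lemma main_est (k n : ℕ) (hn : 27 ≤ n) (hL1 : 1 ≤ LCut n) (ha1 : 1 ≤ aCut n) :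
    (n:ℝ)^(k+2) * SigmaB (k+2) n
      ≤ (LCut n)^k * (8 * 4913 * LCut n / Real.sqrt n + 16 * 4913 / (n:ℝ)^((1:ℝ)/3)) := by
  classical
  have hn0 : (0:ℝ) < (n:ℝ) := by
    have : 0 < n := by omega
    exact_mod_cast this
  have hn1 : (1:ℝ) ≤ (n:ℝ) := by
    have : 1 ≤ n := by omega
    exact_mod_cast this
  have hLpos : (0:ℝ) < LCut n := lt_of_lt_of_le one_pos hL1
  have hnL : (0:ℝ) < (n:ℝ) / LCut n := div_pos hn0 hLpos
  set y : ℝ := (n:ℝ)^((1:ℝ)/3) with hydef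
  have hy1 : (1:ℝ) ≤ y := Real.one_le_rpow hn1 (by norm_num)
  have hy0 : (0:ℝ) < y := lt_of_lt_of_le one_pos hy1
  have hy2 : y^2 = (n:ℝ)^((2:ℝ)/3) := by
    rw [hydef, ← Real.rpow_natCast ((n:ℝ)^((1:ℝ)/3)) 2, ← Real.rpow_mul hn0.le]
    norm_num
  have hsq : (0:ℝ) < Real.sqrt n := Real.sqrt_pos.2 hn0
  have hsq2 : Real.sqrt n * Real.sqrt n = (n:ℝ) := Real.mul_self_sqrt hn0.le
  have hysq : y ≤ Real.sqrt n := by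
    rw [Real.sqrt_eq_rpow]
    exact Real.rpow_le_rpow_of_exponent_le hn1 (by norm_num)
  set B := Finset.univ.filter
      (fun μ : Nat.Partition n =>
        (μ.parts.card : ℝ) ≤ LCut n ∧
        (n : ℝ) / LCut n ≤ (μ.parts.sup : ℝ) ∧
        (μ.parts.sup : ℝ) < (n : ℝ) - aCut n) with hB
  have hmemB : ∀ μ ∈ B, μ.parts.sup ∈ μ.parts ∧ 1 ≤ μ.parts.sup ∧ μ.parts.sup ≤ n := by
    intro μ hμ
    rw [hB, Finset.mem_filter] at hμ
    obtain ⟨-, -, hc2, -⟩ := hμ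
    have hne : μ.parts ≠ 0 := by
      intro h0
      rw [h0] at hc2
      have : ((0:Multiset ℕ).sup : ℝ) = 0 := by simp
      rw [this] at hc2
      linarith
    have hmem := msup_mem μ.parts hne
    exact ⟨hmem, μ.parts_pos hmem, parts_le μ _ hmem⟩
  -- Step 1
  have step1 : SigmaB (k+2) n ≤ (LCut n/(n:ℝ))^k * ∑ μ ∈ B, Wgt μ := by
    rw [SigmaB, ← hB, Finset.mul_sum]
    apply Finset.sum_le_sum
    intro μ hμ
    obtain ⟨hmem, h1T, hTn⟩ := hmemB μ hμ
    have hc2 : (n:ℝ)/LCut n ≤ (μ.parts.sup : ℝ) := by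
      rw [hB, Finset.mem_filter] at hμ
      exact hμ.2.2.1
    have hTpos : (0:ℝ) < (μ.parts.sup : ℝ) := by exact_mod_cast h1T
    have hp1 : pOf μ ≤ LCut n/(n:ℝ) :=
      (pOf_le_inv μ hmem h1T hTn).trans (inv_T_le _ _ _ hn0 hLpos hTpos hc2)
    calc pOf μ ^ (k+2) = pOf μ ^ k * pOf μ ^ 2 := by rw [← pow_add]
      _ ≤ (LCut n/(n:ℝ))^k * Wgt μ := by
          apply mul_le_mul (pow_le_pow_left₀ (pOf_nonneg μ) hp1 k) (pOf_sq_le_Wgt μ)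
            (by positivity) (by positivity)
  -- Step 2
  set Tset := (Finset.Icc 1 n).filter
      (fun T : ℕ => ((n : ℝ) / LCut n ≤ (T:ℝ) ∧ (T:ℝ) < (n : ℝ) - aCut n)) with hTset
  have hmaps : ∀ μ ∈ B, μ.parts.sup ∈ Tset := by
    intro μ hμ
    obtain ⟨hmem, h1T, hTn⟩ := hmemB μ hμ
    rw [hB, Finset.mem_filter] at hμ
    rw [hTset, Finset.mem_filter]
    exact ⟨Finset.mem_Icc.2 ⟨h1T, hTn⟩, hμ.2.2.1, hμ.2.2.2⟩
  have fiber : ∑ μ ∈ B, Wgt μ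
      = ∑ T ∈ Tset, ∑ μ ∈ B.filter (fun μ => μ.parts.sup = T), Wgt μ :=
    (Finset.sum_fiberwise_of_maps_to hmaps _).symm
  have inner : ∀ T ∈ Tset,
      ∑ μ ∈ B.filter (fun μ => μ.parts.sup = T), Wgt μ ≤ ((T:ℝ)^2)⁻¹ * Q (n - T) := by
    intro T hTs
    rw [hTset, Finset.mem_filter] at hTs
    obtain ⟨hIcc, -, -⟩ := hTs
    obtain ⟨h1T, hTn⟩ := Finset.mem_Icc.1 hIcc
    calc ∑ μ ∈ B.filter (fun μ => μ.parts.sup = T), Wgt μ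
        ≤ ∑ μ ∈ Finset.univ.filter (fun μ : Nat.Partition n => T ∈ μ.parts), Wgt μ := by
          apply Finset.sum_le_sum_of_subset_of_nonneg
          · intro μ hμ
            rw [Finset.mem_filter] at hμ
            obtain ⟨hμB, hsup⟩ := hμ
            rw [Finset.mem_filter]
            refine ⟨Finset.mem_univ μ, ?_⟩
            rw [← hsup]
            exact (hmemB μ hμB).1
          · intro μ _ _
            exact Wgt_nonneg μ
      _ ≤ ∑ μ ∈ Finset.univ.filter (fun μ : Nat.Partition n => T ∈ μ.parts),
            (μ.parts.count T : ℝ) * Wgt μ := by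
          apply Finset.sum_le_sum
          intro μ hμ
          rw [Finset.mem_filter] at hμ
          have hc : 1 ≤ μ.parts.count T := Multiset.count_pos.2 hμ.2
          have hcR : (1:ℝ) ≤ (μ.parts.count T : ℝ) := by exact_mod_cast hc
          exact le_mul_of_one_le_left (Wgt_nonneg μ) hcR
      _ ≤ ∑ μ : Nat.Partition n, (μ.parts.count T : ℝ) * Wgt μ := by
          apply Finset.sum_le_sum_of_subset_of_nonneg (Finset.filter_subset _ _)
          intro μ _ _
          have := Wgt_nonneg μ
          positivity
      _ ≤ ((T:ℝ)^2)⁻¹ * Q (n - T) := core n T h1T hTn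
  have sumTset : ∑ μ ∈ B, Wgt μ ≤ ∑ T ∈ Tset, ((T:ℝ)^2)⁻¹ * Q (n - T) := by
    rw [fiber]
    exact Finset.sum_le_sum inner
  -- split Tset
  have hsplit := (Finset.sum_filter_add_sum_filter_not Tset (fun T => 2*T ≤ n)
    (fun T => ((T:ℝ)^2)⁻¹ * Q (n - T)))
  -- Low part
  set t₀ := ⌈(n:ℝ)/LCut n⌉₊ with ht₀
  have ht₀1 : 1 ≤ t₀ := Nat.one_le_iff_ne_zero.2 (by
    intro h0
    have := Nat.ceil_pos.2 hnL
    omega)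
  have ht₀le : (n:ℝ)/LCut n ≤ (t₀:ℝ) := Nat.le_ceil _
  have low : ∑ T ∈ Tset.filter (fun T => 2*T ≤ n), ((T:ℝ)^2)⁻¹ * Q (n - T)
      ≤ (2 * LCut n/(n:ℝ)) * (4 * 4913 / ((n:ℝ) * Real.sqrt n)) := by
    have hterm : ∀ T ∈ Tset.filter (fun T => 2*T ≤ n),
        ((T:ℝ)^2)⁻¹ * Q (n - T) ≤ ((T:ℝ)^2)⁻¹ * (4 * 4913 / ((n:ℝ) * Real.sqrt n)) := by
      intro T hT
      rw [Finset.mem_filter] at hT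
      obtain ⟨hTs, h2T⟩ := hT
      rw [hTset, Finset.mem_filter] at hTs
      obtain ⟨hIcc, -, -⟩ := hTs
      obtain ⟨h1T, hTn⟩ := Finset.mem_Icc.1 hIcc
      apply mul_le_mul_of_nonneg_left _ (by positivity)
      have hrec := (Q_bound (n - T)).trans_eq (by rw [fQ])
      set x := ((n - T : ℕ):ℝ) + 1 with hxd
      have hcast : ((n - T : ℕ):ℝ) = (n:ℝ) - (T:ℝ) := by
        rw [Nat.cast_sub hTn]
      have hTle : (T:ℝ) ≤ (n:ℝ)/2 := by
        have : (2*T : ℕ) ≤ n := h2T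
        have h2 : ((2*T:ℕ):ℝ) ≤ (n:ℝ) := by exact_mod_cast this
        push_cast at h2
        linarith
      have hxm : (n:ℝ)/2 ≤ x := by
        rw [hxd, hcast]
        linarith
      have hxpos : (0:ℝ) < x := by linarith
      have hsx : 0 < Real.sqrt x := Real.sqrt_pos.2 hxpos
      have hsx2 : Real.sqrt x * Real.sqrt x = x := Real.mul_self_sqrt hxpos.le
      have hba : Real.sqrt n ≤ 2 * Real.sqrt x := by
        nlinarith [sq_nonneg (2 * Real.sqrt x - Real.sqrt n)]
      have hkey : 4913 * (1 / (x * Real.sqrt x)) ≤ 4 * 4913 / ((n:ℝ) * Real.sqrt n) := by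
        rw [mul_one_div, div_le_div_iff₀ (by positivity) (by positivity)]
        nlinarith
      linarith
    have hsum := Finset.sum_le_sum hterm
    rw [← Finset.sum_mul] at hsum
    have hsub : Tset.filter (fun T => 2*T ≤ n) ⊆ Finset.Icc t₀ n := by
      intro T hT
      rw [Finset.mem_filter] at hT
      obtain ⟨hTs, -⟩ := hT
      rw [hTset, Finset.mem_filter] at hTs
      obtain ⟨hIcc, hc1, -⟩ := hTs
      obtain ⟨-, hTn⟩ := Finset.mem_Icc.1 hIcc
      exact Finset.mem_Icc.2 ⟨Nat.ceil_le.2 hc1, hTn⟩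
    have hS3 : ∑ T ∈ Tset.filter (fun T => 2*T ≤ n), ((T:ℝ)^2)⁻¹ ≤ 2 * LCut n/(n:ℝ) := by
      calc ∑ T ∈ Tset.filter (fun T => 2*T ≤ n), ((T:ℝ)^2)⁻¹
          ≤ ∑ T ∈ Finset.Icc t₀ n, ((T:ℝ)^2)⁻¹ := by
            apply Finset.sum_le_sum_of_subset_of_nonneg hsub
            intro T _ _
            positivity
        _ ≤ 2 / (t₀:ℝ) := S3 ht₀1 n
        _ ≤ 2 / ((n:ℝ)/LCut n) := by
            apply div_le_div_of_nonneg_left (by norm_num) hnL ht₀le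
        _ = 2 * LCut n/(n:ℝ) := by
            field_simp
    calc ∑ T ∈ Tset.filter (fun T => 2*T ≤ n), ((T:ℝ)^2)⁻¹ * Q (n - T)
        ≤ (∑ T ∈ Tset.filter (fun T => 2*T ≤ n), ((T:ℝ)^2)⁻¹)
            * (4 * 4913 / ((n:ℝ) * Real.sqrt n)) := hsum
      _ ≤ (2 * LCut n/(n:ℝ)) * (4 * 4913 / ((n:ℝ) * Real.sqrt n)) := by
          apply mul_le_mul_of_nonneg_right hS3 (by positivity)
  -- High part
  set m₁ := ⌊aCut n⌋₊ + 1 with hm₁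
  have ha0 : (0:ℝ) ≤ aCut n := by linarith
  have hm₁a : aCut n ≤ (m₁:ℝ) := by
    have := Nat.lt_floor_add_one (aCut n)
    rw [hm₁]
    push_cast
    linarith
  have hsa : (0:ℝ) < Real.sqrt (aCut n) := Real.sqrt_pos.2 (by linarith)
  have high : ∑ T ∈ Tset.filter (fun T => ¬ 2*T ≤ n), ((T:ℝ)^2)⁻¹ * Q (n - T)
      ≤ (4/(n:ℝ)^2) * (4913 * (4 / y)) := by
    have hterm : ∀ T ∈ Tset.filter (fun T => ¬ 2*T ≤ n),
        ((T:ℝ)^2)⁻¹ * Q (n - T) ≤ (4/(n:ℝ)^2) * (4913 * fQ (n - T)) := by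
      intro T hT
      rw [Finset.mem_filter] at hT
      obtain ⟨hTs, h2T⟩ := hT
      have hTgt : (n:ℝ) < 2*(T:ℝ) := by
        have : n < 2*T := by omega
        exact_mod_cast this
      have hT0 : (0:ℝ) < (T:ℝ) := by linarith
      have hinv : ((T:ℝ)^2)⁻¹ ≤ 4/(n:ℝ)^2 := by
        rw [inv_le_iff_one_le_mul₀ (by positivity)]
        rw [div_mul_eq_mul_div, le_div_iff₀ (by positivity)]
        nlinarith
      have hQb : Q (n - T) ≤ 4913 * fQ (n - T) := Q_bound _
      exact mul_le_mul hinv hQb (Q_nonneg _) (by positivity)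
    have hsum := Finset.sum_le_sum hterm
    rw [← Finset.mul_sum] at hsum
    have himg : ∑ T ∈ Tset.filter (fun T => ¬ 2*T ≤ n), fQ (n - T) ≤ 4 / y := by
      have heq : ∑ T ∈ Tset.filter (fun T => ¬ 2*T ≤ n), fQ (n - T)
          = ∑ i ∈ (Tset.filter (fun T => ¬ 2*T ≤ n)).image (fun T => n - T), fQ i := by
        rw [Finset.sum_image]
        intro u hu v hv huv
        rw [Finset.mem_coe, Finset.mem_filter] at hu hv
        have hu2 : u ∈ Finset.Icc 1 n := (Finset.mem_filter.1 hu.1).1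
        have hv2 : v ∈ Finset.Icc 1 n := (Finset.mem_filter.1 hv.1).1
        have := (Finset.mem_Icc.1 hu2).2
        have := (Finset.mem_Icc.1 hv2).2
        beta_reduce at huv
        omega
      rw [heq]
      have hsubI : (Tset.filter (fun T => ¬ 2*T ≤ n)).image (fun T => n - T)
          ⊆ Finset.Icc m₁ n := by
        intro i hi
        rw [Finset.mem_image] at hi
        obtain ⟨T, hT, rfl⟩ := hi
        rw [Finset.mem_filter] at hT
        obtain ⟨hTs, -⟩ := hT
        rw [hTset, Finset.mem_filter] at hTs
        obtain ⟨hIcc, -, hc2⟩ := hTs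
        obtain ⟨-, hTn⟩ := Finset.mem_Icc.1 hIcc
        have hcast : ((n - T : ℕ):ℝ) = (n:ℝ) - (T:ℝ) := by rw [Nat.cast_sub hTn]
        have halt : aCut n < ((n - T:ℕ):ℝ) := by rw [hcast]; linarith
        have hfl : ⌊aCut n⌋₊ < n - T := Nat.floor_lt ha0 |>.2 halt
        exact Finset.mem_Icc.2 ⟨by omega, by omega⟩
      calc ∑ i ∈ (Tset.filter (fun T => ¬ 2*T ≤ n)).image (fun T => n - T), fQ i
          ≤ ∑ i ∈ Finset.Icc m₁ n, fQ i :=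
            Finset.sum_le_sum_of_subset_of_nonneg hsubI (fun i _ _ => fQ_nonneg i)
        _ ≤ 2 / Real.sqrt m₁ := S1b (by omega) n
        _ ≤ 2 / Real.sqrt (aCut n) := by
            apply div_le_div_of_nonneg_left (by norm_num) hsa (Real.sqrt_le_sqrt hm₁a)
        _ ≤ 4 / y := by
            have hya : y/2 ≤ Real.sqrt (aCut n) := by
              rw [show y/2 = Real.sqrt ((y/2)^2) by
                rw [Real.sqrt_sq (by positivity)]]
              apply Real.sqrt_le_sqrt
              rw [aCut, ← hy2]
              nlinarith
            rw [div_le_div_iff₀ hsa (by positivity)]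
            nlinarith
    calc ∑ T ∈ Tset.filter (fun T => ¬ 2*T ≤ n), ((T:ℝ)^2)⁻¹ * Q (n - T)
        ≤ (4/(n:ℝ)^2) * ∑ T ∈ Tset.filter (fun T => ¬ 2*T ≤ n), (4913 * fQ (n - T)) := hsum
      _ ≤ (4/(n:ℝ)^2) * (4913 * (4 / y)) := by
          apply mul_le_mul_of_nonneg_left _ (by positivity)
          rw [← Finset.mul_sum]
          apply mul_le_mul_of_nonneg_left himg (by norm_num)
  -- combine
  have step2 : ∑ μ ∈ B, Wgt μ
      ≤ (2 * LCut n/(n:ℝ)) * (4 * 4913 / ((n:ℝ) * Real.sqrt n))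
        + (4/(n:ℝ)^2) * (4913 * (4 / y)) := by
    rw [← hsplit] at sumTset
    linarith [low, high]
  -- final combination
  have hWnn : 0 ≤ ∑ μ ∈ B, Wgt μ := Finset.sum_nonneg (fun μ _ => Wgt_nonneg μ)
  have hnk : ((n:ℝ))^k ≠ 0 := by positivity
  have hsqne : Real.sqrt n ≠ 0 := ne_of_gt hsq
  have hyne : y ≠ 0 := ne_of_gt hy0
  have hnne : (n:ℝ) ≠ 0 := ne_of_gt hn0
  calc (n:ℝ)^(k+2) * SigmaB (k+2) n
      ≤ (n:ℝ)^(k+2) * ((LCut n/(n:ℝ))^k * ∑ μ ∈ B, Wgt μ) :=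
        mul_le_mul_of_nonneg_left step1 (by positivity)
    _ ≤ (n:ℝ)^(k+2) * ((LCut n/(n:ℝ))^k *
          ((2 * LCut n/(n:ℝ)) * (4 * 4913 / ((n:ℝ) * Real.sqrt n))
            + (4/(n:ℝ)^2) * (4913 * (4 / y)))) := by
        apply mul_le_mul_of_nonneg_left _ (by positivity)
        exact mul_le_mul_of_nonneg_left step2 (by positivity)
    _ = (LCut n)^k * (8 * 4913 * LCut n / Real.sqrt n + 16 * 4913 / y) := by
        rw [pow_add, div_pow]
        field_simp
        ring


lemma LCut_ge_one {n : ℕ} (hn : 2 ≤ n) : 1 ≤ LCut n := by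
  have hnR : (2:ℝ) ≤ (n:ℝ) := by exact_mod_cast hn
  have h2 : (2:ℝ) ≤ 2*(n:ℝ)^3 := by
    have h3 : (1:ℝ) ≤ (n:ℝ)^3 := one_le_pow₀ (by linarith)
    linarith
  rw [LCut]
  calc (1:ℝ) = Real.logb 2 2 := (Real.logb_self_eq_one (by norm_num)).symm
    _ ≤ Real.logb 2 (2 * (n:ℝ)^3) :=
        Real.logb_le_logb_of_le (by norm_num) (by norm_num) h2

lemma log_ge_one {n : ℕ} (hn : 27 ≤ n) : 1 ≤ Real.log n := by
  have hnR : (27:ℝ) ≤ (n:ℝ) := by exact_mod_cast hn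
  rw [Real.le_log_iff_exp_le (by linarith)]
  have := Real.exp_one_lt_d9
  linarith

lemma LCut_le_log {n : ℕ} (hn : 27 ≤ n) : LCut n ≤ 7 * Real.log n := by
  have hnR : (27:ℝ) ≤ (n:ℝ) := by exact_mod_cast hn
  have hn0 : (0:ℝ) < (n:ℝ) := by linarith
  have hlog2 : (0.6931471803:ℝ) < Real.log 2 := Real.log_two_gt_d9
  have hlogn : 1 ≤ Real.log n := log_ge_one hn
  rw [LCut, Real.logb, div_le_iff₀ (by linarith)]
  rw [Real.log_mul (by norm_num) (by positivity), Real.log_pow]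
  push_cast
  nlinarith

lemma aCut_ge_one {n : ℕ} (hn : 27 ≤ n) : 1 ≤ aCut n := by
  have hnR : (27:ℝ) ≤ (n:ℝ) := by exact_mod_cast hn
  have h1 : (27:ℝ)^((2:ℝ)/3) ≤ (n:ℝ)^((2:ℝ)/3) :=
    Real.rpow_le_rpow (by norm_num) hnR (by norm_num)
  have h9 : (27:ℝ)^((2:ℝ)/3) = 9 := by
    rw [show (27:ℝ) = 3^(3:ℕ) by norm_num, ← Real.rpow_natCast 3 3,
      ← Real.rpow_mul (by norm_num)]
    norm_num
  rw [aCut]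
  nlinarith


set_option maxHeartbeats 1000000 in
theorem stmt_16 (r : ℕ) (hr : 2 ≤ r) :
    Filter.Tendsto (fun n : ℕ => (n : ℝ) ^ r * SigmaB r n) Filter.atTop (nhds 0) := by
  obtain ⟨k, rfl⟩ : ∃ k, r = k + 2 := ⟨r - 2, by omega⟩
  have gtend : Filter.Tendsto
      (fun n : ℕ => (24 * 4913 * 7^(k+1)) * (Real.log n ^ (k+1) / (n:ℝ)^((1:ℝ)/3)))
      Filter.atTop (nhds 0) := by
    have h := isLittleO_log_rpow_rpow_atTop (((k+1:ℕ)):ℝ) (show (0:ℝ) < 1/3 by norm_num)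
    have h2 : (fun x : ℝ => Real.log x ^ (((k+1:ℕ)):ℝ)) = (fun x : ℝ => Real.log x ^ (k+1)) := by
      funext x; rw [Real.rpow_natCast]
    rw [h2] at h
    have h3 := h.tendsto_div_nhds_zero
    have h4 := h3.comp (tendsto_natCast_atTop_atTop (R := ℝ))
    have h5 := h4.const_mul (24 * 4913 * 7^(k+1) : ℝ)
    rw [mul_zero] at h5
    exact h5
  apply squeeze_zero' (f := fun n : ℕ => (n : ℝ) ^ (k+2) * SigmaB (k+2) n)
    (g := fun n : ℕ => (24 * 4913 * 7^(k+1) : ℝ) * (Real.log n ^ (k+1) / (n:ℝ)^((1:ℝ)/3)))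
  · apply Filter.Eventually.of_forall
    intro n
    have h1 : 0 ≤ SigmaB (k+2) n :=
      Finset.sum_nonneg (fun μ _ => pow_nonneg (pOf_nonneg μ) _)
    positivity
  · filter_upwards [Filter.eventually_ge_atTop 27] with n hn
    have hL1 : 1 ≤ LCut n := LCut_ge_one (by omega)
    have ha1 : 1 ≤ aCut n := aCut_ge_one hn
    have h := main_est k n hn hL1 ha1
    have hn0 : (0:ℝ) < (n:ℝ) := by
      have : 0 < n := by omega
      exact_mod_cast this
    have hn1 : (1:ℝ) ≤ (n:ℝ) := by
      have : 1 ≤ n := by omega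
      exact_mod_cast this
    set y : ℝ := (n:ℝ)^((1:ℝ)/3) with hydef
    have hy1 : (1:ℝ) ≤ y := Real.one_le_rpow hn1 (by norm_num)
    have hy0 : (0:ℝ) < y := lt_of_lt_of_le one_pos hy1
    have hsq : (0:ℝ) < Real.sqrt n := Real.sqrt_pos.2 hn0
    have hysq : y ≤ Real.sqrt n := by
      rw [Real.sqrt_eq_rpow]
      exact Real.rpow_le_rpow_of_exponent_le hn1 (by norm_num)
    have hLpos : (0:ℝ) < LCut n := lt_of_lt_of_le one_pos hL1
    have step : (LCut n)^k * (8 * 4913 * LCut n / Real.sqrt n + 16 * 4913 / y)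
        ≤ 24 * 4913 * (LCut n)^(k+1) / y := by
      have e1 : (LCut n)^k * (8 * 4913 * LCut n / Real.sqrt n)
          = 8 * 4913 * (LCut n)^(k+1) / Real.sqrt n := by
        rw [pow_succ]
        field_simp
      have e2 : 8 * 4913 * (LCut n)^(k+1) / Real.sqrt n ≤ 8 * 4913 * (LCut n)^(k+1) / y := by
        apply div_le_div_of_nonneg_left (by positivity) hy0 hysq
      have hk : (LCut n)^k ≤ (LCut n)^(k+1) := by
        apply pow_le_pow_right₀ hL1 (by omega)
      have e3 : (LCut n)^k * (16 * 4913 / y) ≤ 16 * 4913 * (LCut n)^(k+1) / y := by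
        calc (LCut n)^k * (16 * 4913 / y) = (16 * 4913 * (LCut n)^k)/y := by ring
          _ ≤ (16 * 4913 * (LCut n)^(k+1))/y := by gcongr
      calc (LCut n)^k * (8 * 4913 * LCut n / Real.sqrt n + 16 * 4913 / y)
          = (LCut n)^k * (8 * 4913 * LCut n / Real.sqrt n) + (LCut n)^k * (16 * 4913 / y) := by
            ring
        _ ≤ 8 * 4913 * (LCut n)^(k+1) / y + 16 * 4913 * (LCut n)^(k+1) / y := by
            rw [e1] at *
            linarith [e2, e3]
        _ = 24 * 4913 * (LCut n)^(k+1) / y := by ring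
    have step2 : 24 * 4913 * (LCut n)^(k+1) / y
        ≤ (24 * 4913 * 7^(k+1)) * (Real.log n ^ (k+1) / y) := by
      have hLlog : LCut n ≤ 7 * Real.log n := LCut_le_log hn
      have hpow : (LCut n)^(k+1) ≤ (7 * Real.log n)^(k+1) :=
        pow_le_pow_left₀ (by linarith) hLlog (k+1)
      rw [mul_pow] at hpow
      have hnum : 24*4913*(LCut n)^(k+1) ≤ 24*4913*(7^(k+1) * Real.log n^(k+1)) := by
        nlinarith [hpow]
      have e : (24 * 4913 * 7^(k+1) : ℝ) * (Real.log n ^ (k+1) / y)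
          = (24*4913*(7^(k+1) * Real.log n^(k+1)))/y := by ring
      rw [e, div_le_div_iff₀ hy0 hy0]
      nlinarith [hnum, hy0]
    calc (n:ℝ)^(k+2) * SigmaB (k+2) n
        ≤ (LCut n)^k * (8 * 4913 * LCut n / Real.sqrt n + 16 * 4913 / y) := h
      _ ≤ 24 * 4913 * (LCut n)^(k+1) / y := step
      _ ≤ (24 * 4913 * 7^(k+1)) * (Real.log n ^ (k+1) / y) := step2
  · exact gtend
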